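/- arXiv:2605.28484 — 5 statements merged into one kernel-verified Lean document; each statement's English description precedes it below -/
import Mathlib

section
/- For the list Zipper comonad, the first comonad law (L1') holds: for every type α and every zipper z : Zipper α, extend extract z = z. Equivalently, extend extract = id as a function Zipper α → Zipper α. -/
/-- A list zipper: a focused element with left context (stored reversed,
nearest neighbor first) and right context. -/
structure Zipper (α : Type*) where
  left : List α
  focus : α
  right : List α

namespace Zipper

variable {α β γ δ : Type*}

/-- Extract the focused element. -/
def extract (z : Zipper α) : α := z.focus

/-- Move the focus one step to the left (identity if the left context is empty). -/
def moveLeft : Zipper α → Zipper α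
  | ⟨a :: l, c, r⟩ => ⟨l, a, c :: r⟩
  | z => z

/-- Move the focus one step to the right (identity if the right context is empty). -/
def moveRight : Zipper α → Zipper α
  | ⟨l, c, b :: r⟩ => ⟨c :: l, b, r⟩
  | z => z

/-- Auxiliary: successive left shifts, structurally on the left context. -/
def leftsAux : List α → α → List α → List (Zipper α)
  | [], _, _ => []
  | a :: l, c, r => ⟨l, a, c :: r⟩ :: leftsAux l a (c :: r)

/-- The list [moveLeft z, moveLeft (moveLeft z), …] of successive left shifts. -/
def lefts (z : Zipper α) : List (Zipper α) := leftsAux z.left z.focus z.right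

/-- Auxiliary: successive right shifts, structurally on the right context. -/
def rightsAux : List α → α → List α → List (Zipper α)
  | _, _, [] => []
  | l, c, b :: r => ⟨c :: l, b, r⟩ :: rightsAux (c :: l) b r

/-- The list [moveRight z, moveRight (moveRight z), …] of successive right shifts. -/
def rights (z : Zipper α) : List (Zipper α) := rightsAux z.left z.focus z.right

/-- CoKleisli extension: apply the local rule `f` at every position. -/
def extend (f : Zipper α → β) (z : Zipper α) : Zipper β :=
  ⟨(lefts z).map f, f z, (rights z).map f⟩

/-- The underlying list of a zipper. -/
def toList (z : Zipper α) : List α := z.left.reverse ++ [z.focus] ++ z.right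

/-- The zipper refocused at position `i` (intended for `i < (toList z).length`). -/
def focusAt (z : Zipper α) (i : ℕ) : Zipper α :=
  ⟨((toList z).take i).reverse, (toList z).getD i z.focus, (toList z).drop (i + 1)⟩

end Zipper


lemma leftsAux_map_extract {α : Type*} (l : List α) (c : α) (r : List α) :
    (Zipper.leftsAux l c r).map Zipper.extract = l := by
  induction l generalizing c r with
  | nil => rfl
  | cons a l ih => simp [Zipper.leftsAux, Zipper.extract, ih]

lemma rightsAux_map_extract {α : Type*} (l : List α) (c : α) (r : List α) :
    (Zipper.rightsAux l c r).map Zipper.extract = r := by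
  induction r generalizing c l with
  | nil => rfl
  | cons b r ih => simp [Zipper.rightsAux, Zipper.extract, ih]

lemma extend_extract {α : Type*} (z : Zipper α) :
    Zipper.extend Zipper.extract z = z := by
  cases z with
  | mk l c r =>
    simp [Zipper.extend, Zipper.lefts, Zipper.rights, Zipper.extract,
      leftsAux_map_extract, rightsAux_map_extract]

/-- L1': extending by extract is the identity. -/
theorem zipper_comonad_law1 {α : Type*} (z : Zipper α) :
    Zipper.extend Zipper.extract z = z ∧
    (Zipper.extend (Zipper.extract : Zipper α → α) = (id : Zipper α → Zipper α)) := by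
  exact ⟨extend_extract z, funext extend_extract⟩
end

section
/- For the list Zipper comonad, the third comonad law (L3', associativity of extension) holds: for all functions f : Zipper α → β and g : Zipper β → γ and every zipper z : Zipper α, extend g (extend f z) = extend (g ∘ extend f) z. Equivalently, extend g ∘ extend f = extend (g ∘ extend f). -/
namespace Zipper

lemma leftsAux_map {α β : Type*} (f : Zipper α → β) :
    ∀ (l : List α) (c : α) (r : List α),
      leftsAux ((leftsAux l c r).map f) (f ⟨l, c, r⟩) ((rightsAux l c r).map f)
        = (leftsAux l c r).map (extend f)
  | [], _, _ => rfl
  | a :: l, c, r => by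
    have h := leftsAux_map f l a (c :: r)
    rw [show rightsAux l a (c :: r) = ⟨a :: l, c, r⟩ :: rightsAux (a :: l) c r from rfl,
      List.map_cons] at h
    simp only [leftsAux, rightsAux, List.map_cons, extend, lefts, rights, h]

lemma rightsAux_map {α β : Type*} (f : Zipper α → β) :
    ∀ (r : List α) (c : α) (l : List α),
      rightsAux ((leftsAux l c r).map f) (f ⟨l, c, r⟩) ((rightsAux l c r).map f)
        = (rightsAux l c r).map (extend f)
  | [], _, _ => rfl
  | b :: r, c, l => by
    have h := rightsAux_map f r b (c :: l)
    rw [show leftsAux (c :: l) b r = ⟨l, c, b :: r⟩ :: leftsAux l c (b :: r) from rfl,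
      List.map_cons] at h
    simp only [leftsAux, rightsAux, List.map_cons, extend, lefts, rights, h]

lemma extend_extend {α β γ : Type*} (f : Zipper α → β) (g : Zipper β → γ) (z : Zipper α) :
    extend g (extend f z) = extend (g ∘ extend f) z := by
  obtain ⟨l, c, r⟩ := z
  simp only [extend, lefts, rights, leftsAux_map, rightsAux_map, List.map_map]
  rfl

end Zipper

/-- L3': associativity of extension. -/
theorem zipper_comonad_law3 {α β γ : Type*} (f : Zipper α → β) (g : Zipper β → γ)
    (z : Zipper α) :
    Zipper.extend g (Zipper.extend f z) = Zipper.extend (g ∘ Zipper.extend f) z ∧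
    (Zipper.extend g ∘ Zipper.extend f = Zipper.extend (g ∘ Zipper.extend f)) := by
  exact ⟨Zipper.extend_extend f g z, funext fun w => Zipper.extend_extend f g w⟩
end

section
/- Pointwise characterization of extend: for every function f : Zipper α → β and every zipper z : Zipper α of total length n, toList (extend f z) = (List.range n).map (fun i => f (focusAt z i)); that is, the i-th element of the extended zipper's underlying list is f applied to the zipper refocused at position i. -/
/-!
Shifting the focus does not change the underlying list, and (at a valid index) `focusAt`
depends on nothing but that list. So the `k`-th left shift of `⟨l, c, r⟩` is its refocusing
at position `l.length - k`, the `k`-th right shift its refocusing at `l.length + k`, and the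
zipper itself is its refocusing at `l.length`.
-/

namespace Zipper

variable {α : Type*}

@[simp]
theorem length_toList (l : List α) (c : α) (r : List α) :
    (toList ⟨l, c, r⟩).length = l.length + 1 + r.length := by
  simp [toList]
  omega

theorem toList_moveLeft (z : Zipper α) : toList (moveLeft z) = toList z := by
  obtain ⟨_ | ⟨a, l⟩, c, r⟩ := z <;> simp [moveLeft, toList]

theorem toList_moveRight (z : Zipper α) : toList (moveRight z) = toList z := by
  obtain ⟨l, c, _ | ⟨b, r⟩⟩ := z <;> simp [moveRight, toList]

theorem map_focusAt_congr {z z' : Zipper α} (h : toList z = toList z') {is : List ℕ}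
    (his : ∀ i ∈ is, i < (toList z).length) :
    is.map (focusAt z) = is.map (focusAt z') := by
  refine List.map_congr_left fun i hi => ?_
  have hi' := his i hi
  simp only [focusAt, h, List.getD_eq_getElem _ _ (h ▸ hi')]

theorem focusAt_length_left (l : List α) (c : α) (r : List α) :
    focusAt ⟨l, c, r⟩ l.length = ⟨l, c, r⟩ := by
  simp [focusAt, toList, List.getElem_append_right, List.drop_append]

theorem reverse_leftsAux (l : List α) (c : α) (r : List α) :
    (leftsAux l c r).reverse = (List.range' 0 l.length).map (focusAt ⟨l, c, r⟩) := by
  induction l generalizing c r with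
  | nil => rfl
  | cons a l ih =>
    calc (leftsAux (a :: l) c r).reverse
        = (List.range' 0 l.length).map (focusAt ⟨l, a, c :: r⟩)
            ++ [focusAt ⟨l, a, c :: r⟩ l.length] := by
          simp [leftsAux, ih, focusAt_length_left]
      _ = (List.range' 0 (l.length + 1)).map (focusAt ⟨l, a, c :: r⟩) := by
          simp [List.range'_concat]
      _ = (List.range' 0 (a :: l).length).map (focusAt ⟨a :: l, c, r⟩) :=
          map_focusAt_congr (toList_moveLeft ⟨a :: l, c, r⟩) fun i hi => by
            simp [moveLeft, List.mem_range'_1] at hi ⊢; omega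

theorem rightsAux_eq (l : List α) (c : α) (r : List α) :
    rightsAux l c r = (List.range' (l.length + 1) r.length).map (focusAt ⟨l, c, r⟩) := by
  induction r generalizing l c with
  | nil => rfl
  | cons b r ih =>
    calc rightsAux l c (b :: r)
        = focusAt ⟨c :: l, b, r⟩ (c :: l).length
            :: (List.range' ((c :: l).length + 1) r.length).map (focusAt ⟨c :: l, b, r⟩) := by
          rw [rightsAux, ih, focusAt_length_left]
      _ = (List.range' (l.length + 1) (r.length + 1)).map (focusAt ⟨c :: l, b, r⟩) := by
          simp [List.range'_succ]
      _ = (List.range' (l.length + 1) (b :: r).length).map (focusAt ⟨l, c, b :: r⟩) :=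
          map_focusAt_congr (toList_moveRight ⟨l, c, b :: r⟩) fun i hi => by
            simp [moveRight, List.mem_range'_1] at hi ⊢; omega

theorem reverse_lefts_append_cons_rights (z : Zipper α) :
    (lefts z).reverse ++ z :: rights z = (List.range (toList z).length).map (focusAt z) := by
  obtain ⟨l, c, r⟩ := z
  rw [lefts, rights, reverse_leftsAux, rightsAux_eq, length_toList, List.range_eq_range',
    ← List.range'_append, List.range'_concat]
  simp [focusAt_length_left]

end Zipper

/-- Pointwise characterization of extend: the i-th element of the extended
zipper's underlying list is f applied to the zipper refocused at position i. -/
theorem extend_toList_eq_map_focusAt {α β : Type*} (f : Zipper α → β) (z : Zipper α) :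
    Zipper.toList (Zipper.extend f z) =
      (List.range (Zipper.toList z).length).map (fun i => f (Zipper.focusAt z i)) := by
  calc Zipper.toList (Zipper.extend f z)
      = ((Zipper.lefts z).reverse ++ z :: Zipper.rights z).map f := by
        simp [Zipper.toList, Zipper.extend, List.map_reverse]
    _ = _ := by
        rw [Zipper.reverse_lefts_append_cons_rights, List.map_map]
        rfl
end

section
/- extract is a two-sided identity for coKleisli composition over the list Zipper comonad: for every coKleisli arrow f : Zipper α → β, extract >=> f = f and f >=> extract = f. -/
/-- CoKleisli composition over the list Zipper comonad. -/
def cokComp {α β γ : Type*} (f : Zipper α → β) (g : Zipper β → γ) : Zipper α → γ :=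
  fun z => g (Zipper.extend f z)


/-- extract is a two-sided identity for coKleisli composition. -/
theorem extract_cokComp_identity {α β : Type*} (f : Zipper α → β) :
    cokComp (Zipper.extract : Zipper α → α) f = f ∧
    cokComp f (Zipper.extract : Zipper β → β) = f := by
  constructor
  · funext z
    have : Zipper.extend (Zipper.extract : Zipper α → α) z = z := by
      cases z with
      | mk l c r =>
        simp [Zipper.extend, Zipper.lefts, Zipper.rights, Zipper.extract,
          leftsAux_map_extract, rightsAux_map_extract]
    simp [cokComp, this]
  · funext z
    rfl
end

section
/- The Constraint Grammar safety invariant is preserved by comonadic extension: let R be a type of readings and let r : Zipper (Set R) → Set R be a rule such that for every zipper z whose focus is a nonempty set, r z is nonempty. Then for every zipper z : Zipper (Set R) all of whose positions (every element of the left context, the focus, and every element of the right context) are nonempty sets, every position of extend r z is a nonempty set. Consequently, iterating extend over any sequence of such rules never removes the last reading at any position. -/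
/-- All positions of a zipper of reading sets are nonempty. -/
def allPositionsNonempty {R : Type*} (z : Zipper (Set R)) : Prop :=
  (∀ s ∈ z.left, s.Nonempty) ∧ z.focus.Nonempty ∧ (∀ s ∈ z.right, s.Nonempty)

/-!
Every position of `extend f z` is `f` applied to a shift of `z`, and the focus of a shift is
an element of the left or right context of `z`. So if `f` maps zippers with a good focus to good
values, `extend f` maps zippers that are good everywhere to zippers that are good everywhere;
the statement about rule sequences is then an induction on the list of rules.
-/

namespace Zipper

variable {α β : Type*}

def Forall (p : α → Prop) (z : Zipper α) : Prop :=
  (∀ a ∈ z.left, p a) ∧ p z.focus ∧ ∀ a ∈ z.right, p a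

theorem focus_mem_of_mem_leftsAux {l : List α} {c : α} {r : List α} {z : Zipper α}
    (hz : z ∈ leftsAux l c r) : z.focus ∈ l := by
  induction l generalizing c r with
  | nil => simp [leftsAux] at hz
  | cons a l ih =>
    rcases List.mem_cons.mp hz with rfl | hz
    · exact List.mem_cons_self
    · exact List.mem_cons_of_mem _ (ih hz)

theorem focus_mem_of_mem_rightsAux {l : List α} {c : α} {r : List α} {z : Zipper α}
    (hz : z ∈ rightsAux l c r) : z.focus ∈ r := by
  induction r generalizing l c with
  | nil => simp [rightsAux] at hz
  | cons b r ih =>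
    rcases List.mem_cons.mp hz with rfl | hz
    · exact List.mem_cons_self
    · exact List.mem_cons_of_mem _ (ih hz)

theorem Forall.extend {p : α → Prop} {q : β → Prop} {f : Zipper α → β}
    (hf : ∀ z : Zipper α, p z.focus → q (f z)) {z : Zipper α} (hz : z.Forall p) :
    (z.extend f).Forall q := by
  obtain ⟨hleft, hfocus, hright⟩ := hz
  refine ⟨?_, hf z hfocus, ?_⟩
  · intro b hb
    obtain ⟨z', hz', rfl⟩ := List.mem_map.mp hb
    exact hf z' (hleft _ (focus_mem_of_mem_leftsAux hz'))
  · intro b hb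
    obtain ⟨z', hz', rfl⟩ := List.mem_map.mp hb
    exact hf z' (hright _ (focus_mem_of_mem_rightsAux hz'))

theorem Forall.foldl_extend {p : α → Prop} {fs : List (Zipper α → α)}
    (hfs : ∀ f ∈ fs, ∀ z : Zipper α, p z.focus → p (f z)) {z : Zipper α} (hz : z.Forall p) :
    (fs.foldl (fun z f => z.extend f) z).Forall p := by
  induction fs generalizing z with
  | nil => exact hz
  | cons f fs ih =>
    exact ih (fun g hg => hfs g (List.mem_cons_of_mem _ hg))
      (hz.extend (hfs f List.mem_cons_self))

end Zipper

/-- The Constraint Grammar safety invariant is preserved by comonadic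
extension: a rule that never empties a nonempty focus preserves nonemptiness
of all positions under extend; consequently, iterating extend over any
sequence of such rules never removes the last reading at any position. -/
theorem cg_safety_invariant {R : Type*} (r : Zipper (Set R) → Set R)
    (hr : ∀ z : Zipper (Set R), z.focus.Nonempty → (r z).Nonempty)
    (z : Zipper (Set R)) (hz : allPositionsNonempty z) :
    allPositionsNonempty (Zipper.extend r z) ∧
    ∀ rules : List (Zipper (Set R) → Set R),
      (∀ r' ∈ rules, ∀ z' : Zipper (Set R), z'.focus.Nonempty → (r' z').Nonempty) →
      allPositionsNonempty (rules.foldl (fun z' r' => Zipper.extend r' z') z) :=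
  ⟨Zipper.Forall.extend hr hz, fun _ hrules => Zipper.Forall.foldl_extend hrules hz⟩
end
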